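/- arXiv:2603.29862 — 4 statements merged into one kernel-verified Lean document; each statement's English description precedes it below -/
import Mathlib

section
/- Let T > 0, let J : ℝ → Matrix (Fin m) (Fin p) ℝ be continuous on [0,T], let J_1, …, J_k be finitely many matrices in Matrix (Fin m) (Fin p) ℝ, let V and V_1, …, V_k be symmetric positive definite m×m real matrices, and define the salted Fisher information matrix I_S = ∫_0^T J(t)ᵀ V⁻¹ J(t) dt + Σ_{j=1}^k J_jᵀ V_j⁻¹ J_j and the hybrid regressor Gramian G = ∫_0^T J(t)ᵀ J(t) dt + Σ_{j=1}^k J_jᵀ J_j. If there exists α > 0 such that G − α·I_p is positive semidefinite (hybrid persistence of excitation), then I_S is positive definite. -/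
/-!
For positive definite weights `W`, `Wⱼ` the quadratic form of `∫ Jᵀ W J + ∑ Jⱼᵀ Wⱼ Jⱼ` at `x`
is `∫ ⟪J x, W J x⟫ + ∑ ⟪Jⱼ x, Wⱼ Jⱼ x⟫`, a sum of nonnegative terms. It vanishes iff
`J t x = 0` for a.e. `t ∈ (0, T]` and `Jⱼ x = 0` for all `j`, a condition that does not involve
the weights. So `I_S` (weights `V⁻¹`, `Vⱼ⁻¹`) is positive definite iff `G` (identity weights)
is, and `G ≥ α • 1` with `α > 0` is positive definite.
-/

open MeasureTheory Matrix

section QuadraticForm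

variable {m n : Type*} {M : ℝ → Matrix n n ℝ} {a b : ℝ} {μ : Measure ℝ}

lemma isHermitian_of_intervalIntegral (hM : ∀ t, (M t).IsHermitian) :
    (of fun i j => ∫ t in a..b, M t i j ∂μ).IsHermitian := by
  ext i j
  simp only [conjTranspose_apply, of_apply, star_trivial]
  exact intervalIntegral.integral_congr fun t _ => (hM t).apply i j

variable [Fintype m] [Fintype n]

lemma dotProduct_transpose_mul_mul_mulVec (A : Matrix m n ℝ) (W : Matrix m m ℝ) (x : n → ℝ) :
    x ⬝ᵥ ((Aᵀ * W * A) *ᵥ x) = (A *ᵥ x) ⬝ᵥ (W *ᵥ (A *ᵥ x)) := by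
  rw [← mulVec_mulVec, ← mulVec_mulVec, dotProduct_mulVec, vecMul_transpose]

lemma Matrix.PosDef.dotProduct_mulVec_eq_zero_iff {W : Matrix m m ℝ} (hW : W.PosDef)
    {y : m → ℝ} :
    y ⬝ᵥ (W *ᵥ y) = 0 ↔ y = 0 := by
  refine ⟨fun h => ?_, fun h => by simp [h]⟩
  by_contra hy
  simpa [h] using hW.dotProduct_mulVec_pos hy

lemma Matrix.PosSemidef.posDef_iff_dotProduct_mulVec_ne_zero {A : Matrix n n ℝ}
    (hA : A.PosSemidef) :
    A.PosDef ↔ ∀ x : n → ℝ, x ≠ 0 → x ⬝ᵥ (A *ᵥ x) ≠ 0 := by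
  simp only [posDef_iff_dotProduct_mulVec, hA.isHermitian, true_and, star_trivial]
  exact forall₂_congr fun x _ => (hA.dotProduct_mulVec_nonneg x).lt_iff_ne'

lemma dotProduct_mulVec_of_intervalIntegral
    (hM : ∀ i j, IntervalIntegrable (fun t => M t i j) μ a b) (x : n → ℝ) :
    x ⬝ᵥ (of (fun i j => ∫ t in a..b, M t i j ∂μ) *ᵥ x) = ∫ t in a..b, x ⬝ᵥ (M t *ᵥ x) ∂μ := by
  have hij (i j : n) : IntervalIntegrable (fun t => x i * (M t i j * x j)) μ a b :=
    ((hM i j).mul_const _).const_mul _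
  have hi (i : n) : IntervalIntegrable (fun t => ∑ j, x i * (M t i j * x j)) μ a b := by
    simpa only [Finset.sum_fn] using IntervalIntegrable.sum Finset.univ fun j _ => hij i j
  simp only [dotProduct, mulVec, of_apply, Finset.mul_sum]
  rw [intervalIntegral.integral_finsetSum fun i _ => hi i]
  refine Finset.sum_congr rfl fun i _ => ?_
  rw [intervalIntegral.integral_finsetSum fun j _ => hij i j]
  simp only [intervalIntegral.integral_const_mul, intervalIntegral.integral_mul_const]

end QuadraticForm

section WeightedGramian

variable {m n σ : Type*} [Fintype m] [Fintype σ]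

noncomputable def weightedGramian (T : ℝ) (J : ℝ → Matrix m n ℝ) (Jd : σ → Matrix m n ℝ)
    (W : Matrix m m ℝ) (Wd : σ → Matrix m m ℝ) : Matrix n n ℝ :=
  (of fun a b => ∫ t in (0:ℝ)..T, ((J t)ᵀ * W * J t) a b) + ∑ j, (Jd j)ᵀ * Wd j * Jd j

variable {T : ℝ} {J : ℝ → Matrix m n ℝ} {Jd : σ → Matrix m n ℝ}
  {W : Matrix m m ℝ} {Wd : σ → Matrix m m ℝ}

lemma isHermitian_weightedGramian (hW : W.IsHermitian) (hWd : ∀ j, (Wd j).IsHermitian) :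
    (weightedGramian T J Jd W Wd).IsHermitian :=
  (isHermitian_of_intervalIntegral fun t => isHermitian_conjTranspose_mul_mul (J t) hW).add <|
    Finset.sum_induction _ IsHermitian (fun _ _ => IsHermitian.add) isHermitian_zero
      fun j _ => isHermitian_conjTranspose_mul_mul (Jd j) (hWd j)

variable [Fintype n] (hT : 0 ≤ T) (hJ : ContinuousOn J (Set.Icc 0 T))
include hT hJ

lemma dotProduct_weightedGramian_mulVec (x : n → ℝ) :
    x ⬝ᵥ (weightedGramian T J Jd W Wd *ᵥ x) =
      (∫ t in (0:ℝ)..T, (J t *ᵥ x) ⬝ᵥ (W *ᵥ (J t *ᵥ x))) +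
        ∑ j, (Jd j *ᵥ x) ⬝ᵥ (Wd j *ᵥ (Jd j *ᵥ x)) := by
  rw [weightedGramian, add_mulVec, dotProduct_add, sum_mulVec, dotProduct_sum,
    dotProduct_mulVec_of_intervalIntegral (M := fun t => (J t)ᵀ * W * J t) fun i j =>
      ((by fun_prop : Continuous fun A : Matrix m n ℝ => (Aᵀ * W * A) i j).comp_continuousOn
        hJ).intervalIntegrable_of_Icc hT]
  simp only [dotProduct_transpose_mul_mul_mulVec]

lemma posSemidef_weightedGramian (hW : W.PosSemidef) (hWd : ∀ j, (Wd j).PosSemidef) :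
    (weightedGramian T J Jd W Wd).PosSemidef := by
  refine posSemidef_iff_dotProduct_mulVec.mpr
    ⟨isHermitian_weightedGramian hW.isHermitian fun j => (hWd j).isHermitian, fun x => ?_⟩
  rw [star_trivial, dotProduct_weightedGramian_mulVec hT hJ]
  exact add_nonneg
    (intervalIntegral.integral_nonneg hT fun t _ => hW.dotProduct_mulVec_nonneg _)
    (Finset.sum_nonneg fun j _ => (hWd j).dotProduct_mulVec_nonneg _)

lemma dotProduct_weightedGramian_mulVec_eq_zero_iff (hW : W.PosDef)
    (hWd : ∀ j, (Wd j).PosDef) (x : n → ℝ) :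
    x ⬝ᵥ (weightedGramian T J Jd W Wd *ᵥ x) = 0 ↔
      (∀ᵐ t ∂volume.restrict (Set.Ioc 0 T), J t *ᵥ x = 0) ∧ ∀ j, Jd j *ᵥ x = 0 := by
  have hint : IntervalIntegrable (fun t => (J t *ᵥ x) ⬝ᵥ (W *ᵥ (J t *ᵥ x))) volume 0 T :=
    ((by fun_prop : Continuous fun A : Matrix m n ℝ => (A *ᵥ x) ⬝ᵥ (W *ᵥ (A *ᵥ x)))
      |>.comp_continuousOn hJ).intervalIntegrable_of_Icc hT
  have hq {V : Matrix m m ℝ} (hV : V.PosDef) (y : m → ℝ) : 0 ≤ y ⬝ᵥ (V *ᵥ y) :=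
    hV.posSemidef.dotProduct_mulVec_nonneg y
  rw [dotProduct_weightedGramian_mulVec hT hJ, add_eq_zero_iff_of_nonneg
    (intervalIntegral.integral_nonneg hT fun t _ => hq hW _)
    (Finset.sum_nonneg fun j _ => hq (hWd j) _),
    intervalIntegral.integral_eq_zero_iff_of_le_of_nonneg_ae hT
      (Filter.Eventually.of_forall fun t => hq hW _) hint,
    Finset.sum_eq_zero_iff_of_nonneg fun j _ => hq (hWd j) _]
  simp only [Filter.EventuallyEq, Pi.zero_apply, hW.dotProduct_mulVec_eq_zero_iff,
    (hWd _).dotProduct_mulVec_eq_zero_iff, Finset.mem_univ, true_imp_iff]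

lemma weightedGramian_posDef_iff {W' : Matrix m m ℝ} {Wd' : σ → Matrix m m ℝ}
    (hW : W.PosDef) (hWd : ∀ j, (Wd j).PosDef) (hW' : W'.PosDef) (hWd' : ∀ j, (Wd' j).PosDef) :
    (weightedGramian T J Jd W Wd).PosDef ↔ (weightedGramian T J Jd W' Wd').PosDef := by
  rw [(posSemidef_weightedGramian hT hJ hW.posSemidef fun j => (hWd j).posSemidef)
      |>.posDef_iff_dotProduct_mulVec_ne_zero,
    (posSemidef_weightedGramian hT hJ hW'.posSemidef fun j => (hWd' j).posSemidef)
      |>.posDef_iff_dotProduct_mulVec_ne_zero]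
  simp only [ne_eq, dotProduct_weightedGramian_mulVec_eq_zero_iff hT hJ hW hWd,
    dotProduct_weightedGramian_mulVec_eq_zero_iff hT hJ hW' hWd']

end WeightedGramian

/-- HPE implies the salted Fisher information matrix is positive definite. -/
theorem sfim_posDef_of_hpe {m p k : ℕ}
    (T : ℝ) (hT : 0 < T)
    (J : ℝ → Matrix (Fin m) (Fin p) ℝ)
    (hJ : ContinuousOn J (Set.Icc 0 T))
    (Jd : Fin k → Matrix (Fin m) (Fin p) ℝ)
    (V : Matrix (Fin m) (Fin m) ℝ) (hV : V.PosDef)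
    (Vd : Fin k → Matrix (Fin m) (Fin m) ℝ) (hVd : ∀ j, (Vd j).PosDef)
    (IS G : Matrix (Fin p) (Fin p) ℝ)
    (hIS : IS = (Matrix.of fun a b => ∫ t in (0:ℝ)..T, ((J t)ᵀ * V⁻¹ * J t) a b)
        + ∑ j, (Jd j)ᵀ * (Vd j)⁻¹ * Jd j)
    (hG : G = (Matrix.of fun a b => ∫ t in (0:ℝ)..T, ((J t)ᵀ * J t) a b)
        + ∑ j, (Jd j)ᵀ * Jd j)
    (α : ℝ) (hα : 0 < α)
    (hHPE : (G - α • (1 : Matrix (Fin p) (Fin p) ℝ)).PosSemidef) :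
    IS.PosDef := by
  have hG_posDef : G.PosDef := by
    simpa using (PosDef.one.smul hα).add_posSemidef hHPE
  have hG_eq : G = weightedGramian T J Jd 1 fun _ => 1 := by
    simpa only [weightedGramian, Matrix.mul_one] using hG
  change IS = weightedGramian T J Jd V⁻¹ (fun j => (Vd j)⁻¹) at hIS
  rw [hIS, weightedGramian_posDef_iff hT.le hJ hV.inv (fun j => (hVd j).inv) PosDef.one
    fun _ => PosDef.one, ← hG_eq]
  exact hG_posDef
end

section
/- Let T > 0, let J : ℝ → Matrix (Fin m) (Fin p) ℝ be continuous on [0,T], let J_1, …, J_k be matrices in Matrix (Fin m) (Fin p) ℝ, let V and V_1, …, V_k be symmetric positive definite m×m real matrices, and suppose c > 0 satisfies wᵀ V⁻¹ w ≥ c‖w‖² and wᵀ V_j⁻¹ w ≥ c‖w‖² for every w ∈ ℝ^m and every j. Define I_S = ∫_0^T J(t)ᵀ V⁻¹ J(t) dt + Σ_{j=1}^k J_jᵀ V_j⁻¹ J_j and G = ∫_0^T J(t)ᵀ J(t) dt + Σ_{j=1}^k J_jᵀ J_j. If α > 0 is such that G − α·I_p is positive semidefinite, then I_S − (c·α)·I_p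 is positive semidefinite; in particular vᵀ I_S v ≥ c·α·‖v‖² for all v ∈ ℝ^p. -/
/-!
Writing `W = V⁻¹ - c • 1` and `W_j = V_j⁻¹ - c • 1`, which are positive semidefinite by the
hypothesis on `c`, linearity of the integral gives
`I_S - (c α) • 1 = ∫ Jᵀ W J + ∑ J_jᵀ W_j J_j + c • (G - α • 1)`.
Every summand is positive semidefinite: congruence preserves positive semidefiniteness, and so do
integrals and sums.
-/

open MeasureTheory Matrix

namespace Matrix

variable {n : Type*}

theorem intervalIntegrable_apply_of_continuousOn {μ : Measure ℝ} [IsLocallyFiniteMeasure μ]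
    {a b : ℝ} {M : ℝ → Matrix n n ℝ} (hM : ContinuousOn M (Set.uIcc a b)) (i j : n) :
    IntervalIntegrable (fun t => M t i j) μ a b :=
  ContinuousOn.intervalIntegrable (by fun_prop)

theorem of_intervalIntegral_sub_smul {μ : Measure ℝ} {a b : ℝ} {A B : ℝ → Matrix n n ℝ}
    (hA : ∀ i j, IntervalIntegrable (fun t => A t i j) μ a b)
    (hB : ∀ i j, IntervalIntegrable (fun t => B t i j) μ a b) (c : ℝ) :
    (of fun i j => ∫ t in a..b, (A t - c • B t) i j ∂μ) =
      (of fun i j => ∫ t in a..b, A t i j ∂μ) - c • of fun i j => ∫ t in a..b, B t i j ∂μ := by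
  ext i j
  simp only [of_apply, sub_apply, smul_apply, smul_eq_mul]
  rw [intervalIntegral.integral_sub (hA i j) ((hB i j).const_mul c),
    intervalIntegral.integral_const_mul]

theorem transpose_mul_sub_smul_one_mul {m : Type*} [Fintype m] [DecidableEq m]
    (A : Matrix m n ℝ) (B : Matrix m m ℝ) (c : ℝ) :
    Aᵀ * (B - c • 1) * A = Aᵀ * B * A - c • (Aᵀ * A) := by
  rw [Matrix.mul_sub, Matrix.sub_mul, Matrix.mul_smul, Matrix.mul_one, Matrix.smul_mul]

variable [Fintype n]

theorem dotProduct_mulVec_intervalIntegral {μ : Measure ℝ} {a b : ℝ}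
    {M : ℝ → Matrix n n ℝ} (hM : ∀ i j, IntervalIntegrable (fun t => M t i j) μ a b)
    (v : n → ℝ) :
    v ⬝ᵥ (of fun i j => ∫ t in a..b, M t i j ∂μ) *ᵥ v = ∫ t in a..b, v ⬝ᵥ M t *ᵥ v ∂μ := by
  have hrow : ∀ i, IntervalIntegrable (fun t => ∑ j, M t i j * v j) μ a b := fun i => by
    simpa only [Finset.sum_fn] using IntervalIntegrable.sum _ fun j _ => (hM i j).mul_const (v j)
  simp only [dotProduct, mulVec, of_apply]
  rw [intervalIntegral.integral_finsetSum fun i _ => (hrow i).const_mul (v i)]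
  refine Finset.sum_congr rfl fun i _ => ?_
  rw [intervalIntegral.integral_const_mul, intervalIntegral.integral_finsetSum
    fun j _ => (hM i j).mul_const (v j)]
  simp only [intervalIntegral.integral_mul_const]

theorem dotProduct_self_eq_sum_sq (v : n → ℝ) : v ⬝ᵥ v = ∑ i, v i ^ 2 := by
  simp only [dotProduct, sq]

theorem posSemidef_intervalIntegral {μ : Measure ℝ} {a b : ℝ} (hab : a ≤ b)
    {M : ℝ → Matrix n n ℝ} (hM : ∀ i j, IntervalIntegrable (fun t => M t i j) μ a b)
    (hpos : ∀ t ∈ Set.Icc a b, (M t).PosSemidef) :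
    (of fun i j => ∫ t in a..b, M t i j ∂μ).PosSemidef := by
  have hherm : (of fun i j => ∫ t in a..b, M t i j ∂μ).IsHermitian := by
    ext i j
    refine intervalIntegral.integral_congr fun t ht => ?_
    rw [Set.uIcc_of_le hab] at ht
    exact (hpos t ht).isHermitian.apply i j
  refine .of_dotProduct_mulVec_nonneg hherm fun v => ?_
  rw [star_trivial, dotProduct_mulVec_intervalIntegral hM]
  exact intervalIntegral.integral_nonneg hab fun t ht =>
    by simpa using (hpos t ht).dotProduct_mulVec_nonneg v

theorem PosSemidef.transpose_mul_mul_same {m : Type*} [Fintype m] {B : Matrix m m ℝ}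
    (hB : B.PosSemidef) (A : Matrix m n ℝ) : (Aᵀ * B * A).PosSemidef := by
  simpa only [conjTranspose_eq_transpose_of_trivial] using hB.conjTranspose_mul_mul_same A

variable [DecidableEq n]

theorem posSemidef_sub_smul_one_of_forall {A : Matrix n n ℝ} (hA : A.IsHermitian) {r : ℝ}
    (h : ∀ v : n → ℝ, r * ∑ i, v i ^ 2 ≤ v ⬝ᵥ A *ᵥ v) : (A - r • 1).PosSemidef := by
  refine .of_dotProduct_mulVec_nonneg (hA.sub (isHermitian_one.smul (.all r))) fun v => ?_
  rw [star_trivial, sub_mulVec, dotProduct_sub, smul_mulVec, one_mulVec, dotProduct_smul,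
    smul_eq_mul, dotProduct_self_eq_sum_sq, sub_nonneg]
  exact h v

theorem PosSemidef.mul_sum_sq_le_dotProduct_mulVec {A : Matrix n n ℝ} {r : ℝ}
    (h : (A - r • 1).PosSemidef) (v : n → ℝ) : r * ∑ i, v i ^ 2 ≤ v ⬝ᵥ A *ᵥ v := by
  have := h.dotProduct_mulVec_nonneg v
  rwa [star_trivial, sub_mulVec, dotProduct_sub, smul_mulVec, one_mulVec, dotProduct_smul,
    smul_eq_mul, dotProduct_self_eq_sum_sq, sub_nonneg] at this

end Matrix

theorem sfim_lower_bound_of_hpe_general {m p k : ℕ}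
    (T : ℝ) (hT : 0 < T)
    (J : ℝ → Matrix (Fin m) (Fin p) ℝ)
    (hJ : ContinuousOn J (Set.Icc 0 T))
    (Jd : Fin k → Matrix (Fin m) (Fin p) ℝ)
    (V : Matrix (Fin m) (Fin m) ℝ) (hV : V.PosDef)
    (Vd : Fin k → Matrix (Fin m) (Fin m) ℝ) (hVd : ∀ j, (Vd j).PosDef)
    (c : ℝ) (hc : 0 < c)
    (hcV : ∀ w : Fin m → ℝ, c * (∑ i, w i ^ 2) ≤ w ⬝ᵥ (V⁻¹).mulVec w)
    (hcVd : ∀ (j : Fin k) (w : Fin m → ℝ),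
      c * (∑ i, w i ^ 2) ≤ w ⬝ᵥ ((Vd j)⁻¹).mulVec w)
    (IS G : Matrix (Fin p) (Fin p) ℝ)
    (hIS : IS = (Matrix.of fun a b => ∫ t in (0:ℝ)..T, ((J t)ᵀ * V⁻¹ * J t) a b)
        + ∑ j, (Jd j)ᵀ * (Vd j)⁻¹ * Jd j)
    (hG : G = (Matrix.of fun a b => ∫ t in (0:ℝ)..T, ((J t)ᵀ * J t) a b)
        + ∑ j, (Jd j)ᵀ * Jd j)
    (α : ℝ)
    (hHPE : (G - α • (1 : Matrix (Fin p) (Fin p) ℝ)).PosSemidef) :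
    (IS - (c * α) • (1 : Matrix (Fin p) (Fin p) ℝ)).PosSemidef ∧
      ∀ v : Fin p → ℝ, c * α * (∑ i, v i ^ 2) ≤ v ⬝ᵥ IS.mulVec v := by
  have hJ' : ContinuousOn J (Set.uIcc 0 T) := by rwa [Set.uIcc_of_le hT.le]
  have hint : ∀ (B : Matrix (Fin m) (Fin m) ℝ) a b,
      IntervalIntegrable (fun t => ((J t)ᵀ * B * J t) a b) volume 0 T := fun B =>
    intervalIntegrable_apply_of_continuousOn (by fun_prop)
  have hintG : ∀ a b, IntervalIntegrable (fun t => ((J t)ᵀ * J t) a b) volume 0 T :=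
    intervalIntegrable_apply_of_continuousOn (by fun_prop)
  have hW : (V⁻¹ - c • 1).PosSemidef := posSemidef_sub_smul_one_of_forall hV.isHermitian.inv hcV
  have hWd : ∀ j, ((Vd j)⁻¹ - c • 1).PosSemidef := fun j =>
    posSemidef_sub_smul_one_of_forall (hVd j).isHermitian.inv (hcVd j)
  have hsplit : IS - (c * α) • 1 =
      (of fun a b => ∫ t in (0:ℝ)..T,
          ((J t)ᵀ * (V⁻¹ - c • (1 : Matrix (Fin m) (Fin m) ℝ)) * J t) a b)
        + ∑ j, (Jd j)ᵀ * ((Vd j)⁻¹ - c • 1) * Jd j + c • (G - α • 1) := by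
    simp only [transpose_mul_sub_smul_one_mul]
    rw [of_intervalIntegral_sub_smul (hint V⁻¹) hintG, Finset.sum_sub_distrib,
      ← Finset.smul_sum, hIS, hG, smul_sub, smul_add, mul_smul]
    abel
  have hbound : (IS - (c * α) • 1).PosSemidef := by
    rw [hsplit]
    exact ((posSemidef_intervalIntegral hT.le (hint _)
      fun t _ => hW.transpose_mul_mul_same (J t)).add
      (posSemidef_sum _ fun j _ => (hWd j).transpose_mul_mul_same (Jd j))).add (hHPE.smul hc.le)
  exact ⟨hbound, hbound.mul_sum_sq_le_dotProduct_mulVec⟩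

/-- Quantitative version: HPE with level `α` and uniform weight lower bound `c`
    gives `I_S − c·α·I ⪰ 0`, hence `vᵀ I_S v ≥ c α ‖v‖²`. -/
theorem sfim_lower_bound_of_hpe {m p k : ℕ}
    (T : ℝ) (hT : 0 < T)
    (J : ℝ → Matrix (Fin m) (Fin p) ℝ)
    (hJ : ContinuousOn J (Set.Icc 0 T))
    (Jd : Fin k → Matrix (Fin m) (Fin p) ℝ)
    (V : Matrix (Fin m) (Fin m) ℝ) (hV : V.PosDef)
    (Vd : Fin k → Matrix (Fin m) (Fin m) ℝ) (hVd : ∀ j, (Vd j).PosDef)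
    (c : ℝ) (hc : 0 < c)
    (hcV : ∀ w : Fin m → ℝ, c * (∑ i, w i ^ 2) ≤ w ⬝ᵥ (V⁻¹).mulVec w)
    (hcVd : ∀ (j : Fin k) (w : Fin m → ℝ),
      c * (∑ i, w i ^ 2) ≤ w ⬝ᵥ ((Vd j)⁻¹).mulVec w)
    (IS G : Matrix (Fin p) (Fin p) ℝ)
    (hIS : IS = (Matrix.of fun a b => ∫ t in (0:ℝ)..T, ((J t)ᵀ * V⁻¹ * J t) a b)
        + ∑ j, (Jd j)ᵀ * (Vd j)⁻¹ * Jd j)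
    (hG : G = (Matrix.of fun a b => ∫ t in (0:ℝ)..T, ((J t)ᵀ * J t) a b)
        + ∑ j, (Jd j)ᵀ * Jd j)
    (α : ℝ) (hα : 0 < α)
    (hHPE : (G - α • (1 : Matrix (Fin p) (Fin p) ℝ)).PosSemidef) :
    (IS - (c * α) • (1 : Matrix (Fin p) (Fin p) ℝ)).PosSemidef ∧
      ∀ v : Fin p → ℝ, c * α * (∑ i, v i ^ 2) ≤ v ⬝ᵥ IS.mulVec v :=
  sfim_lower_bound_of_hpe_general T hT J hJ Jd V hV Vd hVd c hc hcV hcVd IS G hIS hG α hHPE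
end

section
/- Let x : ℝ × ℝ^p → ℝ^n, τ : ℝ^p → ℝ, and g : ℝ^n × ℝ^p × ℝ → ℝ, and let θ₀ ∈ ℝ^p with t₀ := τ(θ₀). Assume: (i) τ is Fréchet differentiable at θ₀; (ii) x is Fréchet differentiable at (t₀, θ₀), with time-partial derivative f := D_t x(t₀,θ₀) ∈ ℝ^n and parameter-partial derivative Z := D_θ x(t₀,θ₀), a linear map ℝ^p → ℝ^n; (iii) g is Fréchet differentiable at (x(t₀,θ₀), θ₀, t₀), with partial derivatives gₓ : ℝ^n → ℝ, g_θ : ℝ^p → ℝ, and g_t ∈ ℝ; (iv) g(x(τ(θ),θ), θ, τ(θ)) = 0 for all θ in a neighborhood of θ₀; and (v) g_t + gₓ(f) ≠ 0 (transversal crossing). Then the derivative of the event time satisfies Dτ(θ₀) = −(gₓ ∘ Z + g_θ)/(g_t + gₓ(f)) as a linear map ℝ^p → ℝ; that is, for every v ∈ ℝ^p, Dτ(θ₀)(v) = −(gₓ(Z v) + g_θ(v))/(g_t + gₓ(f)). -/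
open scoped Topology

/-!
Differentiate the identity `g (x (τ θ, θ), θ, τ θ) = 0`, valid near `θ₀`, by the chain rule: the
derivative of the left side vanishes, and splitting the arguments of the linear maps `Dx` and
`Dg` into their components gives `Dτ v · (g_t + gₓ f) + (gₓ (Z v) + g_θ v) = 0` for every `v`.
Transversality lets us divide by `g_t + gₓ f`.
-/

namespace ContinuousLinearMap

variable {R M N P : Type*} [Semiring R] [TopologicalSpace R] [AddCommMonoid M] [Module R M]
  [TopologicalSpace M] [AddCommMonoid N] [Module R N] [TopologicalSpace N]
  [AddCommMonoid P] [Module R P] [TopologicalSpace P]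

theorem apply_prod_eq_smul_add (L : R × M →L[R] N) (s : R) (v : M) :
    L (s, v) = s • L (1, 0) + L (0, v) := by
  rw [← L.map_smul, ← L.map_add]
  simp

theorem apply_triple_eq_add (L : M × N × R →L[R] P) (a : M) (b : N) (s : R) :
    L (a, b, s) = L (a, 0, 0) + L (0, b, 0) + s • L (0, 0, 1) := by
  rw [← L.map_smul, ← L.map_add, ← L.map_add]
  simp

end ContinuousLinearMap

section EventTime

variable {𝕜 : Type*} [NontriviallyNormedField 𝕜]
  {E X F : Type*} [NormedAddCommGroup E] [NormedSpace 𝕜 E] [NormedAddCommGroup X]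
  [NormedSpace 𝕜 X] [NormedAddCommGroup F] [NormedSpace 𝕜 F]

theorem hasFDerivAt_guard_comp {x : 𝕜 × E → X} {τ : E → 𝕜} {g : X × E × 𝕜 → F} {θ₀ : E}
    {Dτ : E →L[𝕜] 𝕜} {Dx : 𝕜 × E →L[𝕜] X} {Dg : X × E × 𝕜 →L[𝕜] F}
    (hτ : HasFDerivAt τ Dτ θ₀) (hx : HasFDerivAt x Dx (τ θ₀, θ₀))
    (hg : HasFDerivAt g Dg (x (τ θ₀, θ₀), θ₀, τ θ₀)) :
    HasFDerivAt (fun θ ↦ g (x (τ θ, θ), θ, τ θ))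
      (Dg.comp ((Dx.comp (Dτ.prod (.id 𝕜 E))).prod ((ContinuousLinearMap.id 𝕜 E).prod Dτ)))
      θ₀ :=
  hg.comp θ₀ <| (hx.comp (f := fun θ ↦ (τ θ, θ)) θ₀ (hτ.prodMk (hasFDerivAt_id θ₀))).prodMk
    ((hasFDerivAt_id θ₀).prodMk hτ)

theorem event_time_linear_relation {x : 𝕜 × E → X} {τ : E → 𝕜} {g : X × E × 𝕜 → F} {θ₀ : E}
    {Dτ : E →L[𝕜] 𝕜} {Dx : 𝕜 × E →L[𝕜] X} {Dg : X × E × 𝕜 →L[𝕜] F}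
    (hτ : HasFDerivAt τ Dτ θ₀) (hx : HasFDerivAt x Dx (τ θ₀, θ₀))
    (hg : HasFDerivAt g Dg (x (τ θ₀, θ₀), θ₀, τ θ₀))
    (hguard : ∀ᶠ θ in 𝓝 θ₀, g (x (τ θ, θ), θ, τ θ) = 0) (v : E) :
    Dτ v • (Dg (0, 0, 1) + Dg (Dx (1, 0), 0, 0)) + (Dg (Dx (0, v), 0, 0) + Dg (0, v, 0)) = 0 := by
  have hzero : HasFDerivAt (fun θ ↦ g (x (τ θ, θ), θ, τ θ)) (0 : E →L[𝕜] F) θ₀ :=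
    (hasFDerivAt_const 0 θ₀).congr_of_eventuallyEq hguard
  have hchain : Dg (Dx (Dτ v, v), v, Dτ v) = 0 := by
    simpa using congrArg (· v) ((hasFDerivAt_guard_comp hτ hx hg).unique hzero)
  have hDg_state_linear (s : 𝕜) (a b : X) : Dg (s • a + b, 0, 0) = s • Dg (a, 0, 0) + Dg (b, 0, 0) := by
    rw [← Dg.map_smul, ← Dg.map_add]
    simp
  rw [Dg.apply_triple_eq_add, Dx.apply_prod_eq_smul_add, hDg_state_linear] at hchain
  rw [← hchain]
  module

end EventTime

/-- Event-time sensitivity: if the event time `τ(θ)` is defined implicitly by a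
    guard condition `g(x(τ(θ),θ), θ, τ(θ)) = 0` and the crossing is transversal,
    then `Dτ(θ₀) = −(gₓ ∘ Z + g_θ)/(g_t + gₓ(f))`. -/
theorem event_time_sensitivity {n p : ℕ}
    (x : ℝ × EuclideanSpace ℝ (Fin p) → EuclideanSpace ℝ (Fin n))
    (τ : EuclideanSpace ℝ (Fin p) → ℝ)
    (g : EuclideanSpace ℝ (Fin n) × EuclideanSpace ℝ (Fin p) × ℝ → ℝ)
    (θ₀ : EuclideanSpace ℝ (Fin p)) (t₀ : ℝ) (ht₀ : t₀ = τ θ₀)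
    -- (i) differentiability of the event time
    (Dτ : EuclideanSpace ℝ (Fin p) →L[ℝ] ℝ)
    (hτ : HasFDerivAt τ Dτ θ₀)
    -- (ii) differentiability of the trajectory, with partial derivatives f and Z
    (Dx : ℝ × EuclideanSpace ℝ (Fin p) →L[ℝ] EuclideanSpace ℝ (Fin n))
    (hx : HasFDerivAt x Dx (t₀, θ₀))
    (f : EuclideanSpace ℝ (Fin n)) (hf : f = Dx (1, 0))
    (Z : EuclideanSpace ℝ (Fin p) →L[ℝ] EuclideanSpace ℝ (Fin n))
    (hZ : ∀ v, Z v = Dx (0, v))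
    -- (iii) differentiability of the guard, with partial derivatives gₓ, g_θ, g_t
    (Dg : EuclideanSpace ℝ (Fin n) × EuclideanSpace ℝ (Fin p) × ℝ →L[ℝ] ℝ)
    (hg : HasFDerivAt g Dg (x (t₀, θ₀), θ₀, t₀))
    (gx : EuclideanSpace ℝ (Fin n) →L[ℝ] ℝ) (hgx : ∀ u, gx u = Dg (u, 0, 0))
    (gθ : EuclideanSpace ℝ (Fin p) →L[ℝ] ℝ) (hgθ : ∀ w, gθ w = Dg (0, w, 0))
    (gt : ℝ) (hgt : gt = Dg (0, 0, 1))
    -- (iv) the guard condition holds near θ₀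
    (hguard : ∀ᶠ θ in 𝓝 θ₀, g (x (τ θ, θ), θ, τ θ) = 0)
    -- (v) transversal crossing
    (htrans : gt + gx f ≠ 0) :
    ∀ v : EuclideanSpace ℝ (Fin p),
      Dτ v = -((gx (Z v) + gθ v) / (gt + gx f)) := by
  intro v
  subst ht₀
  have hrel := event_time_linear_relation hτ hx hg hguard v
  simp only [smul_eq_mul, ← hgx, ← hgθ, ← hgt, ← hf, ← hZ] at hrel
  rw [← neg_div, eq_div_iff htrans]
  linear_combination hrel
end

section
/- Let x, y : ℝ × ℝ^p → ℝ^n (pre- and post-event flows), R : ℝ^n × ℝ^p × ℝ → ℝ^n (reset map), g : ℝ^n × ℝ → ℝ (guard), and τ : ℝ^p → ℝ (event time), and let θ₀ ∈ ℝ^p with t₀ := τ(θ₀) and x₀ := x(t₀,θ₀). Assume: (i) τ is differentiable at θ₀, x and y are differentiable at (t₀,θ₀), R is differentiable at (x₀,θ₀,t₀), and g is differentiable at (x₀,t₀); (ii) for all θ in a neighborhood of θ₀: g(x(τ(θ),θ), τ(θ)) = 0 and y(τ(θ),θ) = R(x(τ(θ),θ), θ, τ(θ)); (iii) with f⁻ :=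 D_t x(t₀,θ₀), f⁺ := D_t y(t₀,θ₀), gₓ := D_x g(x₀,t₀), g_t := D_t g(x₀,t₀), the transversality condition c := g_t + gₓ(f⁻) ≠ 0 holds. Let Z⁻ := D_θ x(t₀,θ₀) and Z⁺ := D_θ y(t₀,θ₀), and let D_x R, D_θ R, D_t R denote the partial derivatives of R at (x₀,θ₀,t₀). Then Z⁺ = Ξ ∘ Z⁻ + D_θ R, where Ξ is the saltation matrix Ξ := D_x R + c⁻¹ • (f⁺ − D_x R(f⁻) − D_t R) ⊗ gₓ, i.e., the linear map v ↦ D_x R(v) + c⁻¹ gₓ(v) • (f⁺ − D_x R(f⁻) − D_t R). -/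
open scoped Topology

/-!
Along the event, `θ ↦ (τ θ, θ)`, the guard identity `g (x (τ θ, θ), τ θ) = 0` and the reset
identity `y (τ θ, θ) = R (x (τ θ, θ), θ, τ θ)` hold identically, so their derivatives at `θ₀`
agree. The guard identity, solved with transversality, gives the derivative of the event time,
`Dτ = -c⁻¹ gₓ Z⁻`; substituting it into the differentiated reset identity gives the jump.
-/

theorem HasFDerivAt.eq_of_eventuallyEq {𝕜 E F : Type*} [NontriviallyNormedField 𝕜]
    [NormedAddCommGroup E] [NormedSpace 𝕜 E] [NormedAddCommGroup F] [NormedSpace 𝕜 F]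
    {f₀ f₁ : E → F} {f₀' f₁' : E →L[𝕜] F} {x : E}
    (h₀ : HasFDerivAt f₀ f₀' x) (h₁ : HasFDerivAt f₁ f₁' x) (h : f₀ =ᶠ[𝓝 x] f₁) : f₀' = f₁' :=
  h₀.unique (h₁.congr_of_eventuallyEq h)

namespace ContinuousLinearMap

variable {𝕜 E F G : Type*} [Semiring 𝕜] [TopologicalSpace 𝕜]
  [AddCommMonoid E] [Module 𝕜 E] [TopologicalSpace E]
  [AddCommMonoid F] [Module 𝕜 F] [TopologicalSpace F]
  [AddCommMonoid G] [Module 𝕜 G] [TopologicalSpace G]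

theorem map_prod_eq_smul_add (L : 𝕜 × F →L[𝕜] G) (s : 𝕜) (w : F) :
    L (s, w) = s • L (1, 0) + L (0, w) := by
  rw [← map_smul, ← map_add]
  simp

theorem map_prod_eq_add_smul (L : E × 𝕜 →L[𝕜] G) (u : E) (s : 𝕜) :
    L (u, s) = L (u, 0) + s • L (0, 1) := by
  rw [← map_smul, ← map_add]
  simp

theorem map_prod_prod_eq_add_add_smul (L : E × F × 𝕜 →L[𝕜] G) (u : E) (w : F) (s : 𝕜) :
    L (u, w, s) = L (u, 0, 0) + L (0, w, 0) + s • L (0, 0, 1) := by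
  rw [← map_smul, ← map_add, ← map_add]
  simp

end ContinuousLinearMap

section HybridEvent

variable {𝕜 P E : Type*} [NontriviallyNormedField 𝕜]
  [NormedAddCommGroup P] [NormedSpace 𝕜 P] [NormedAddCommGroup E] [NormedSpace 𝕜 E]
  {x y : 𝕜 × P → E} {R : E × P × 𝕜 → E} {g : E × 𝕜 → 𝕜} {τ : P → 𝕜} {θ₀ : P}
  {Dτ : P →L[𝕜] 𝕜} {Dx Dy : 𝕜 × P →L[𝕜] E} {DR : E × P × 𝕜 →L[𝕜] E} {Dg : E × 𝕜 →L[𝕜] 𝕜}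

theorem HasFDerivAt.along_event (hx : HasFDerivAt x Dx (τ θ₀, θ₀))
    (hτ : HasFDerivAt τ Dτ θ₀) :
    HasFDerivAt (fun θ ↦ x (τ θ, θ)) (Dx.comp (Dτ.prod (.id 𝕜 P))) θ₀ :=
  hx.comp (f := fun θ ↦ (τ θ, θ)) θ₀ (hτ.prodMk (hasFDerivAt_id θ₀))

theorem guard_fderiv_along_event_eq_zero (hτ : HasFDerivAt τ Dτ θ₀)
    (hx : HasFDerivAt x Dx (τ θ₀, θ₀)) (hg : HasFDerivAt g Dg (x (τ θ₀, θ₀), τ θ₀))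
    (hguard : ∀ᶠ θ in 𝓝 θ₀, g (x (τ θ, θ), τ θ) = 0) (v : P) :
    Dg (Dx (Dτ v, v), Dτ v) = 0 := by
  have h := (hg.comp (f := fun θ ↦ (x (τ θ, θ), τ θ)) θ₀ ((hx.along_event hτ).prodMk hτ))
    |>.eq_of_eventuallyEq (hasFDerivAt_const 0 θ₀) hguard
  simpa using congr($h v)

theorem reset_fderiv_along_event (hτ : HasFDerivAt τ Dτ θ₀)
    (hx : HasFDerivAt x Dx (τ θ₀, θ₀)) (hy : HasFDerivAt y Dy (τ θ₀, θ₀))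
    (hR : HasFDerivAt R DR (x (τ θ₀, θ₀), θ₀, τ θ₀))
    (hreset : ∀ᶠ θ in 𝓝 θ₀, y (τ θ, θ) = R (x (τ θ, θ), θ, τ θ)) (v : P) :
    Dy (Dτ v, v) = DR (Dx (Dτ v, v), v, Dτ v) := by
  have h := (hy.along_event hτ).eq_of_eventuallyEq
    (hR.comp (f := fun θ ↦ (x (τ θ, θ), θ, τ θ)) θ₀
      ((hx.along_event hτ).prodMk ((hasFDerivAt_id θ₀).prodMk hτ))) hreset
  simpa using congr($h v)

theorem eventTime_fderiv_apply (hτ : HasFDerivAt τ Dτ θ₀)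
    (hx : HasFDerivAt x Dx (τ θ₀, θ₀)) (hg : HasFDerivAt g Dg (x (τ θ₀, θ₀), τ θ₀))
    (hguard : ∀ᶠ θ in 𝓝 θ₀, g (x (τ θ, θ), τ θ) = 0)
    (hc : Dg (0, 1) + Dg (Dx (1, 0), 0) ≠ 0) (v : P) :
    Dτ v = -((Dg (0, 1) + Dg (Dx (1, 0), 0))⁻¹ * Dg (Dx (0, v), 0)) := by
  have h := guard_fderiv_along_event_eq_zero hτ hx hg hguard v
  have hDg_fst : Dg (Dτ v • Dx (1, 0) + Dx (0, v), 0)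
      = Dτ v * Dg (Dx (1, 0), 0) + Dg (Dx (0, v), 0) := by
    rw [← smul_eq_mul, ← map_smul Dg, ← map_add Dg]
    simp only [Prod.smul_mk, Prod.mk_add_mk, smul_zero, add_zero]
  rw [Dg.map_prod_eq_add_smul, Dx.map_prod_eq_smul_add, hDg_fst, smul_eq_mul] at h
  field_simp
  linear_combination h

theorem sensitivity_along_event_apply (hτ : HasFDerivAt τ Dτ θ₀)
    (hx : HasFDerivAt x Dx (τ θ₀, θ₀)) (hy : HasFDerivAt y Dy (τ θ₀, θ₀))
    (hR : HasFDerivAt R DR (x (τ θ₀, θ₀), θ₀, τ θ₀))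
    (hreset : ∀ᶠ θ in 𝓝 θ₀, y (τ θ, θ) = R (x (τ θ, θ), θ, τ θ)) (v : P) :
    Dy (0, v) = DR (Dx (0, v), 0, 0) + DR (0, v, 0)
      + Dτ v • (DR (Dx (1, 0), 0, 0) + DR (0, 0, 1) - Dy (1, 0)) := by
  have h := reset_fderiv_along_event hτ hx hy hR hreset v
  have hDR_fst : DR (Dτ v • Dx (1, 0) + Dx (0, v), 0, 0)
      = Dτ v • DR (Dx (1, 0), 0, 0) + DR (Dx (0, v), 0, 0) := by
    rw [← map_smul DR, ← map_add DR]
    simp only [Prod.smul_mk, Prod.mk_add_mk, smul_zero, add_zero]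
  rw [Dy.map_prod_eq_smul_add, Dx.map_prod_eq_smul_add, DR.map_prod_prod_eq_add_add_smul,
    hDR_fst] at h
  linear_combination (norm := module) h

end HybridEvent

/-- Jump part of the hybrid sensitivity evolution: at a transversal guard
    crossing with reset `y(τ(θ),θ) = R(x(τ(θ),θ), θ, τ(θ))`, the parameter
    sensitivity updates as `Z⁺ = Ξ ∘ Z⁻ + D_θ R`, where `Ξ` is the saltation
    matrix `Ξ = D_x R + c⁻¹ (f⁺ − D_x R f⁻ − D_t R) ⊗ gₓ`, `c = g_t + gₓ(f⁻)`. -/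
theorem sensitivity_saltation_update {n p : ℕ}
    (x y : ℝ × EuclideanSpace ℝ (Fin p) → EuclideanSpace ℝ (Fin n))
    (R : EuclideanSpace ℝ (Fin n) × EuclideanSpace ℝ (Fin p) × ℝ →
      EuclideanSpace ℝ (Fin n))
    (g : EuclideanSpace ℝ (Fin n) × ℝ → ℝ)
    (τ : EuclideanSpace ℝ (Fin p) → ℝ)
    (θ₀ : EuclideanSpace ℝ (Fin p)) (t₀ : ℝ) (ht₀ : t₀ = τ θ₀)
    (x₀ : EuclideanSpace ℝ (Fin n)) (hx₀ : x₀ = x (t₀, θ₀))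
    -- (i) differentiability
    (Dτ : EuclideanSpace ℝ (Fin p) →L[ℝ] ℝ) (hτ : HasFDerivAt τ Dτ θ₀)
    (Dx : ℝ × EuclideanSpace ℝ (Fin p) →L[ℝ] EuclideanSpace ℝ (Fin n))
    (hx : HasFDerivAt x Dx (t₀, θ₀))
    (Dy : ℝ × EuclideanSpace ℝ (Fin p) →L[ℝ] EuclideanSpace ℝ (Fin n))
    (hy : HasFDerivAt y Dy (t₀, θ₀))
    (DR : EuclideanSpace ℝ (Fin n) × EuclideanSpace ℝ (Fin p) × ℝ →L[ℝ]
      EuclideanSpace ℝ (Fin n))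
    (hR : HasFDerivAt R DR (x₀, θ₀, t₀))
    (Dg : EuclideanSpace ℝ (Fin n) × ℝ →L[ℝ] ℝ)
    (hg : HasFDerivAt g Dg (x₀, t₀))
    -- (ii) guard and reset relations near θ₀
    (hguard : ∀ᶠ θ in 𝓝 θ₀, g (x (τ θ, θ), τ θ) = 0)
    (hreset : ∀ᶠ θ in 𝓝 θ₀, y (τ θ, θ) = R (x (τ θ, θ), θ, τ θ))
    -- (iii) partial derivatives and transversality
    (fm : EuclideanSpace ℝ (Fin n)) (hfm : fm = Dx (1, 0))
    (fp : EuclideanSpace ℝ (Fin n)) (hfp : fp = Dy (1, 0))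
    (gx : EuclideanSpace ℝ (Fin n) →L[ℝ] ℝ) (hgx : ∀ u, gx u = Dg (u, 0))
    (gt : ℝ) (hgt : gt = Dg (0, 1))
    (c : ℝ) (hcdef : c = gt + gx fm) (hc : c ≠ 0)
    -- sensitivities and reset partial derivatives
    (Zm : EuclideanSpace ℝ (Fin p) →L[ℝ] EuclideanSpace ℝ (Fin n))
    (hZm : ∀ v, Zm v = Dx (0, v))
    (Zp : EuclideanSpace ℝ (Fin p) →L[ℝ] EuclideanSpace ℝ (Fin n))
    (hZp : ∀ v, Zp v = Dy (0, v))
    (DxR : EuclideanSpace ℝ (Fin n) →L[ℝ] EuclideanSpace ℝ (Fin n))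
    (hDxR : ∀ u, DxR u = DR (u, 0, 0))
    (DθR : EuclideanSpace ℝ (Fin p) →L[ℝ] EuclideanSpace ℝ (Fin n))
    (hDθR : ∀ w, DθR w = DR (0, w, 0))
    (DtR : EuclideanSpace ℝ (Fin n)) (hDtR : DtR = DR (0, 0, 1)) :
    ∀ v : EuclideanSpace ℝ (Fin p),
      Zp v = (DxR (Zm v) + (c⁻¹ * gx (Zm v)) • (fp - DxR fm - DtR)) + DθR v := by
  subst ht₀ hx₀ hfm hfp hgt hcdef hDtR
  intro v
  simp only [hZp, hZm, hDxR, hDθR, hgx] at hc ⊢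
  rw [sensitivity_along_event_apply hτ hx hy hR hreset v,
    eventTime_fderiv_apply hτ hx hg hguard hc v]
  module
end
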